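/- Let M=(S,A,P) be an RMDP and T ⊆ S a target set. For every state s ∈ S: s ∈ PAttr_E(M,T) if and only if there exists a pure memoryless environment policy ρ such that for all agent policies σ we have ℙ^{σ,ρ}_M(s)[Reach(T)] > 0. -/

import Mathlib

open scoped BigOperators Classical

/-- A robust MDP over finite state set `S` and finite action set `A`.
Distributions are represented as real-valued probability vectors `S → ℝ`. -/
structure RMDP (S A : Type) [Fintype S] [Fintype A] where
  /-- available actions at each state -/
  Act : S → Finset A
  Act_nonempty : ∀ s, (Act s).Nonempty
  /-- the uncertainty sets -/
  P : S → A → Set (S → ℝ)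
  P_prob : ∀ s, ∀ a ∈ Act s, ∀ p ∈ P s a, (∀ t, 0 ≤ p t) ∧ ∑ t, p t = 1
  P_nonempty : ∀ s, ∀ a ∈ Act s, (P s a).Nonempty
  P_compact : ∀ s, ∀ a ∈ Act s, IsCompact (P s a)

variable {S A : Type} [Fintype S] [Nonempty S] [Fintype A]

/-- An agent policy: given a history and the current state, a probability
distribution over the available actions. -/
structure AgentPolicy (M : RMDP S A) where
  toFun : List (S × A) → S → A → ℝ
  nonneg : ∀ h s a, 0 ≤ toFun h s a
  sum_one : ∀ h s, ∑ a, toFun h s a = 1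
  mem_act : ∀ h s a, toFun h s a ≠ 0 → a ∈ M.Act s

/-- An environment policy: given a history, the current state and the chosen
action, a distribution from the uncertainty set. -/
structure EnvPolicy (M : RMDP S A) where
  toFun : List (S × A) → S → A → S → ℝ
  mem : ∀ h s, ∀ a ∈ M.Act s, toFun h s a ∈ M.P s a

/-- A pure memoryless agent policy deterministically picks an action
depending only on the current state. -/
def AgentPolicy.PureMemoryless {M : RMDP S A} (σ : AgentPolicy M) : Prop :=
  ∃ f : S → A, ∀ h s a, σ.toFun h s a = if a = f s then 1 else 0

/-- A pure memoryless environment policy picks the transition distribution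
depending only on the current state and action. -/
def EnvPolicy.PureMemoryless {M : RMDP S A} (ρ : EnvPolicy M) : Prop :=
  ∃ g : S → A → S → ℝ, ∀ h s a, ρ.toFun h s a = g s a

/-- Probability, under policies `σ, ρ`, of reaching the target `T` within `k`
steps, starting from state `s` with history `h`. -/
noncomputable def reachK (M : RMDP S A) (σ : AgentPolicy M) (ρ : EnvPolicy M) (T : Set S) :
    ℕ → List (S × A) → S → ℝ
  | 0, _, s => if s ∈ T then 1 else 0
  | k + 1, h, s =>
      if s ∈ T then 1
      else ∑ a, σ.toFun h s a * ∑ t, ρ.toFun h s a t * reachK M σ ρ T k (h ++ [(s, a)]) t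

/-- `ℙ^{σ,ρ}_M(s)[Reach(T)]`: the probability of eventually reaching `T`,
which is the supremum over `k` of the probabilities of reaching `T` within `k` steps. -/
noncomputable def reachProb (M : RMDP S A) (σ : AgentPolicy M) (ρ : EnvPolicy M)
    (T : Set S) (s : S) : ℝ :=
  ⨆ k : ℕ, reachK M σ ρ T k [] s

/-- `Val^{s,σ}_M(Reach(T)) = inf_ρ ℙ^{σ,ρ}_M(s)[Reach(T)]`. -/
noncomputable def reachVal (M : RMDP S A) (σ : AgentPolicy M) (T : Set S) (s : S) : ℝ :=
  ⨅ ρ : EnvPolicy M, reachProb M σ ρ T s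

/-- `Val^{s}_M(Reach(T)) = sup_σ inf_ρ ℙ^{σ,ρ}_M(s)[Reach(T)]`. -/
noncomputable def reachValSup (M : RMDP S A) (T : Set S) (s : S) : ℝ :=
  ⨆ σ : AgentPolicy M, reachVal M σ T s

/-- `force_A(s,B)`: the agent has an action that reaches `B` with positive
probability no matter which distribution the environment picks. -/
def forceA (M : RMDP S A) (s : S) (B : Set S) : Prop :=
  ∃ a ∈ M.Act s, ∀ p ∈ M.P s a, 0 < ∑ t, B.indicator p t

/-- `force_E(s,B)`: whatever action the agent picks, the environment can pick a
distribution reaching `B` with positive probability. -/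
def forceE (M : RMDP S A) (s : S) (B : Set S) : Prop :=
  ∀ a ∈ M.Act s, ∃ p ∈ M.P s a, 0 < ∑ t, B.indicator p t

/-- The increasing sequence `T₀ = T`, `T_{i+1} = T_i ∪ {s | force_A(s, T_i)}`. -/
def attrSeqA (M : RMDP S A) (T : Set S) : ℕ → Set S
  | 0 => T
  | i + 1 => attrSeqA M T i ∪ {s | forceA M s (attrSeqA M T i)}

/-- The positive attractor of the agent. -/
def PAttrA (M : RMDP S A) (T : Set S) : Set S := ⋃ i, attrSeqA M T i

/-- The increasing sequence `T₀ = T`, `T_{i+1} = T_i ∪ {s | force_E(s, T_i)}`. -/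
def attrSeqE (M : RMDP S A) (T : Set S) : ℕ → Set S
  | 0 => T
  | i + 1 => attrSeqE M T i ∪ {s | forceE M s (attrSeqE M T i)}

/-- The positive attractor of the environment. -/
def PAttrE (M : RMDP S A) (T : Set S) : Set S := ⋃ i, attrSeqE M T i

/-!
If `s` enters the attractor at stage `i`, let the environment answer every action with a
distribution charging the earliest stage of the attractor it can charge at all; then, whatever
the agent does, some path of length at most `i` with positive probability descends the stages
into `T`. Conversely the attractor is a fixed point of `force_E`, so from each state outside it
the agent has an action all of whose distributions avoid it; always playing that action keeps
the play outside the attractor, hence outside `T`, with probability one.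
-/

lemma Monotone.exists_mem_forall_of_exists {α : Type*} {Q : Set α} (hQ : Q.Nonempty)
    {R : ℕ → α → Prop} (hR : Monotone R) :
    ∃ p ∈ Q, ∀ i, (∃ q ∈ Q, R i q) → R i p := by
  by_cases h : ∃ i, ∃ q ∈ Q, R i q
  · obtain ⟨p, hpQ, hp⟩ := Nat.find_spec h
    exact ⟨p, hpQ, fun i hi => hR (Nat.find_min' h hi) p hp⟩
  · push Not at h
    obtain ⟨p, hp⟩ := hQ
    exact ⟨p, hp, fun i ⟨q, hq, hRq⟩ => absurd hRq (h i q hq)⟩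

lemma sum_indicator_pos_iff {S : Type*} [Fintype S] {p : S → ℝ} (hp : ∀ t, 0 ≤ p t)
    (B : Set S) : 0 < ∑ t, B.indicator p t ↔ ∃ t ∈ B, 0 < p t := by
  rw [Finset.sum_pos_iff_of_nonneg fun t _ => B.indicator_nonneg (fun t _ => hp t) t]
  constructor
  · rintro ⟨t, -, ht⟩
    by_cases htB : t ∈ B
    · exact ⟨t, htB, by rwa [Set.indicator_of_mem htB] at ht⟩
    · simp [Set.indicator_of_notMem htB] at ht
  · rintro ⟨t, htB, ht⟩
    exact ⟨t, Finset.mem_univ t, by rwa [Set.indicator_of_mem htB]⟩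

section

variable {S A : Type} [Fintype S] [Fintype A] {M : RMDP S A} {T : Set S}

lemma RMDP.forceE_iff {s : S} {B : Set S} :
    forceE M s B ↔ ∀ a ∈ M.Act s, ∃ p ∈ M.P s a, ∃ t ∈ B, 0 < p t := by
  refine forall₂_congr fun a ha => exists_congr fun p => and_congr_right fun hp => ?_
  exact sum_indicator_pos_iff (M.P_prob s a ha p hp).1 B

lemma EnvPolicy.toFun_nonneg (ρ : EnvPolicy M) (h : List (S × A)) {s : S} {a : A}
    (ha : a ∈ M.Act s) (t : S) : 0 ≤ ρ.toFun h s a t :=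
  (M.P_prob s a ha _ (ρ.mem h s a ha)).1 t

lemma EnvPolicy.sum_toFun (ρ : EnvPolicy M) (h : List (S × A)) {s : S} {a : A}
    (ha : a ∈ M.Act s) : ∑ t, ρ.toFun h s a t = 1 :=
  (M.P_prob s a ha _ (ρ.mem h s a ha)).2

lemma AgentPolicy.exists_pos (σ : AgentPolicy M) (h : List (S × A)) (s : S) :
    ∃ a, 0 < σ.toFun h s a := by
  by_contra! hσ
  have hzero : ∑ a, σ.toFun h s a = 0 :=
    Finset.sum_eq_zero fun a _ => (hσ a).antisymm (σ.nonneg h s a)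
  simp [σ.sum_one] at hzero

noncomputable def AgentPolicy.ofFun (f : S → A) (hf : ∀ s, f s ∈ M.Act s) :
    AgentPolicy M where
  toFun _ s a := if a = f s then 1 else 0
  nonneg _ _ _ := by split_ifs <;> norm_num
  sum_one _ s := by simp
  mem_act _ s a ha := by
    rw [ite_ne_right_iff] at ha
    exact ha.1 ▸ hf s

noncomputable def transProb (σ : AgentPolicy M) (ρ : EnvPolicy M) (h : List (S × A)) (s : S)
    (a : A) (t : S) : ℝ :=
  σ.toFun h s a * ρ.toFun h s a t

section transProb

variable (σ : AgentPolicy M) (ρ : EnvPolicy M) (h : List (S × A)) (s : S)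

lemma transProb_nonneg (a : A) (t : S) : 0 ≤ transProb σ ρ h s a t := by
  by_cases hσ : σ.toFun h s a = 0
  · simp [transProb, hσ]
  · exact mul_nonneg (σ.nonneg h s a) (ρ.toFun_nonneg h (σ.mem_act h s a hσ) t)

lemma sum_transProb : ∑ a, ∑ t, transProb σ ρ h s a t = 1 := by
  have hrow (a : A) : ∑ t, transProb σ ρ h s a t = σ.toFun h s a := by
    by_cases hσ : σ.toFun h s a = 0
    · simp [transProb, hσ]
    · simp [transProb, ← Finset.mul_sum, ρ.sum_toFun h (σ.mem_act h s a hσ)]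
  simp only [hrow, σ.sum_one]

end transProb

lemma reachK_succ_of_notMem (σ : AgentPolicy M) (ρ : EnvPolicy M) (h : List (S × A)) {s : S}
    (hs : s ∉ T) (k : ℕ) :
    reachK M σ ρ T (k + 1) h s =
      ∑ a, ∑ t, transProb σ ρ h s a t * reachK M σ ρ T k (h ++ [(s, a)]) t := by
  simp only [reachK, hs, if_false, transProb, Finset.mul_sum, mul_assoc]

lemma reachK_of_mem (σ : AgentPolicy M) (ρ : EnvPolicy M) {s : S} (hs : s ∈ T) (k : ℕ)
    (h : List (S × A)) : reachK M σ ρ T k h s = 1 := by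
  cases k <;> simp [reachK, hs]

lemma reachK_mem_Icc (σ : AgentPolicy M) (ρ : EnvPolicy M) (k : ℕ) (h : List (S × A))
    (s : S) : reachK M σ ρ T k h s ∈ Set.Icc 0 1 := by
  induction k generalizing h s with
  | zero => by_cases hs : s ∈ T <;> simp [reachK, hs]
  | succ k ih =>
    by_cases hs : s ∈ T
    · simp [reachK_of_mem σ ρ hs]
    rw [reachK_succ_of_notMem σ ρ h hs]
    refine ⟨Finset.sum_nonneg fun a _ => Finset.sum_nonneg fun t _ =>
      mul_nonneg (transProb_nonneg σ ρ h s a t) (ih _ t).1, ?_⟩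
    calc ∑ a, ∑ t, transProb σ ρ h s a t * reachK M σ ρ T k (h ++ [(s, a)]) t
        ≤ ∑ a, ∑ t, transProb σ ρ h s a t := by
          gcongr with a _ t _
          exact mul_le_of_le_one_right (transProb_nonneg σ ρ h s a t) (ih _ t).2
      _ = 1 := sum_transProb σ ρ h s

lemma reachK_le_reachProb (σ : AgentPolicy M) (ρ : EnvPolicy M) (k : ℕ) (s : S) :
    reachK M σ ρ T k [] s ≤ reachProb M σ ρ T s :=
  le_ciSup ⟨1, Set.forall_mem_range.2 fun k => (reachK_mem_Icc (T := T) σ ρ k [] s).2⟩ k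

lemma reachK_succ_pos {σ : AgentPolicy M} {ρ : EnvPolicy M} {h : List (S × A)} {s : S}
    (hs : s ∉ T) {k : ℕ} {a : A} {t : S} (hst : 0 < transProb σ ρ h s a t)
    (ht : 0 < reachK M σ ρ T k (h ++ [(s, a)]) t) : 0 < reachK M σ ρ T (k + 1) h s := by
  have hterm_nonneg (b : A) (u : S) :
      0 ≤ transProb σ ρ h s b u * reachK M σ ρ T k (h ++ [(s, b)]) u :=
    mul_nonneg (transProb_nonneg σ ρ h s b u) (reachK_mem_Icc σ ρ k _ u).1
  rw [reachK_succ_of_notMem σ ρ h hs]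
  refine Finset.sum_pos' (fun b _ => Finset.sum_nonneg fun u _ => hterm_nonneg b u)
    ⟨a, Finset.mem_univ a, ?_⟩
  exact Finset.sum_pos' (fun u _ => hterm_nonneg a u) ⟨t, Finset.mem_univ t, mul_pos hst ht⟩

lemma reachK_eq_zero_of_closed {σ : AgentPolicy M} {ρ : EnvPolicy M} {C : Set S}
    (hCT : Disjoint C T)
    (hC : ∀ h, ∀ u ∈ C, ∀ a t, transProb σ ρ h u a t ≠ 0 → t ∈ C) (k : ℕ)
    (h : List (S × A)) :
    ∀ u ∈ C, reachK M σ ρ T k h u = 0 := by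
  induction k generalizing h with
  | zero => intro u hu; simp [reachK, hCT.notMem_of_mem_left hu]
  | succ k ih =>
    intro u hu
    rw [reachK_succ_of_notMem σ ρ h (hCT.notMem_of_mem_left hu)]
    refine Finset.sum_eq_zero fun a _ => Finset.sum_eq_zero fun t _ => ?_
    by_cases hst : transProb σ ρ h u a t = 0
    · rw [hst, zero_mul]
    · rw [ih _ t (hC h u hu a t hst), mul_zero]

lemma attrSeqE_mono : Monotone (attrSeqE M T) :=
  monotone_nat_of_le_succ fun _ => Set.subset_union_left

def EnvPolicy.ChargesAttrSeqE (ρ : EnvPolicy M) (T : Set S) : Prop :=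
  ∀ h s, ∀ a ∈ M.Act s, ∀ i, (∃ p ∈ M.P s a, ∃ t ∈ attrSeqE M T i, 0 < p t) →
    ∃ t ∈ attrSeqE M T i, 0 < ρ.toFun h s a t

lemma reachK_pos_of_mem_attrSeqE {ρ : EnvPolicy M} (hρ : ρ.ChargesAttrSeqE T)
    (σ : AgentPolicy M) {i : ℕ} {s : S} (hs : s ∈ attrSeqE M T i) {k : ℕ} (hik : i ≤ k)
    (h : List (S × A)) : 0 < reachK M σ ρ T k h s := by
  induction i generalizing s k h with
  | zero => rw [reachK_of_mem σ ρ (show s ∈ T from hs)]; exact one_pos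
  | succ i ih =>
    obtain _ | k := k
    · omega
    by_cases hsT : s ∈ T
    · rw [reachK_of_mem σ ρ hsT]; exact one_pos
    rcases hs with hs | hforce
    · exact ih hs (by omega) h
    obtain ⟨a, ha⟩ := σ.exists_pos h s
    have haA := σ.mem_act h s a ha.ne'
    obtain ⟨t, ht, hρt⟩ := hρ h s a haA i (RMDP.forceE_iff.1 hforce a haA)
    exact reachK_succ_pos hsT (mul_pos ha hρt) (ih ht (by omega) _)

lemma exists_pureMemoryless_chargesAttrSeqE (M : RMDP S A) (T : Set S) :
    ∃ ρ : EnvPolicy M, ρ.PureMemoryless ∧ ρ.ChargesAttrSeqE T := by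
  have hchoice (s : S) (a : A) : ∃ p : S → ℝ, a ∈ M.Act s → p ∈ M.P s a ∧
      ∀ i, (∃ q ∈ M.P s a, ∃ t ∈ attrSeqE M T i, 0 < q t) → ∃ t ∈ attrSeqE M T i, 0 < p t := by
    by_cases ha : a ∈ M.Act s
    · have hmono : Monotone fun i (p : S → ℝ) => ∃ t ∈ attrSeqE M T i, 0 < p t :=
        fun i j hij p ⟨t, ht, hpt⟩ => ⟨t, attrSeqE_mono hij ht, hpt⟩
      obtain ⟨p, hp, hpi⟩ := hmono.exists_mem_forall_of_exists (M.P_nonempty s a ha)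
      exact ⟨p, fun _ => ⟨hp, hpi⟩⟩
    · exact ⟨0, fun ha' => absurd ha' ha⟩
  choose g hg using hchoice
  exact ⟨⟨fun _ => g, fun _ s a ha => (hg s a ha).1⟩, ⟨g, fun _ _ _ => rfl⟩,
    fun _ s a ha => (hg s a ha).2⟩

lemma exists_PAttrE_eq_attrSeqE (M : RMDP S A) (T : Set S) :
    ∃ n, PAttrE M T = attrSeqE M T n := by
  obtain ⟨n, hn⟩ := WellFoundedGT.monotone_chain_condition ⟨attrSeqE M T, attrSeqE_mono⟩
  refine ⟨n, (Set.iUnion_subset fun i => ?_).antisymm (Set.subset_iUnion _ n)⟩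
  calc attrSeqE M T i ⊆ attrSeqE M T (max n i) := attrSeqE_mono (le_max_right n i)
    _ = attrSeqE M T n := (hn _ (le_max_left n i)).symm

lemma mem_PAttrE_of_forceE {u : S} (hu : forceE M u (PAttrE M T)) : u ∈ PAttrE M T := by
  obtain ⟨n, hn⟩ := exists_PAttrE_eq_attrSeqE M T
  rw [hn] at hu
  exact Set.subset_iUnion _ (n + 1) (Or.inr hu)

lemma exists_act_avoiding_PAttrE {u : S} (hu : u ∉ PAttrE M T) :
    ∃ a ∈ M.Act u, ∀ p ∈ M.P u a, ∀ t ∈ PAttrE M T, p t = 0 := by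
  have hforce := mt mem_PAttrE_of_forceE hu
  simp only [RMDP.forceE_iff, not_forall, not_exists, not_and, not_lt] at hforce
  obtain ⟨a, ha, hp⟩ := hforce
  exact ⟨a, ha, fun p hpP t ht => (hp p hpP t ht).antisymm ((M.P_prob u a ha p hpP).1 t)⟩

lemma exists_agentPolicy_reachK_eq_zero (M : RMDP S A) (T : Set S) :
    ∃ σ : AgentPolicy M, ∀ (ρ : EnvPolicy M) k, ∀ u ∉ PAttrE M T,
      reachK M σ ρ T k [] u = 0 := by
  have hchoice (u : S) : ∃ a ∈ M.Act u, u ∉ PAttrE M T →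
      ∀ p ∈ M.P u a, ∀ t ∈ PAttrE M T, p t = 0 := by
    by_cases hu : u ∈ PAttrE M T
    · obtain ⟨a, ha⟩ := M.Act_nonempty u
      exact ⟨a, ha, fun hu' => absurd hu hu'⟩
    · obtain ⟨a, ha, hp⟩ := exists_act_avoiding_PAttrE hu
      exact ⟨a, ha, fun _ => hp⟩
  choose f hfA hf using hchoice
  refine ⟨AgentPolicy.ofFun f hfA, fun ρ k => reachK_eq_zero_of_closed ?_ ?_ k []⟩
  · exact Set.disjoint_compl_left_iff_subset.2 (Set.subset_iUnion (attrSeqE M T) 0)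
  · intro h u hu a t hst htP
    have hst' : (if a = f u then 1 else 0) * ρ.toFun h u a t ≠ 0 := hst
    rw [ite_mul, one_mul, zero_mul, ite_ne_right_iff] at hst'
    obtain ⟨rfl, hρ⟩ := hst'
    exact hρ (hf u hu _ (ρ.mem h u _ (hfA u)) t htP)

end

theorem stmt1 (M : RMDP S A) (T : Set S) (s : S) :
    s ∈ PAttrE M T ↔
      ∃ ρ : EnvPolicy M, ρ.PureMemoryless ∧
        ∀ σ : AgentPolicy M, 0 < reachProb M σ ρ T s := by
  constructor
  · intro hs
    obtain ⟨i, hi⟩ := Set.mem_iUnion.1 hs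
    obtain ⟨ρ, hρ_pure, hρ⟩ := exists_pureMemoryless_chargesAttrSeqE M T
    exact ⟨ρ, hρ_pure, fun σ =>
      (reachK_pos_of_mem_attrSeqE hρ σ hi le_rfl []).trans_le (reachK_le_reachProb σ ρ i s)⟩
  · rintro ⟨ρ, -, hρ⟩
    by_contra hs
    obtain ⟨σ, hσ⟩ := exists_agentPolicy_reachK_eq_zero M T
    have hzero : reachProb M σ ρ T s = 0 := by
      simp only [reachProb, hσ ρ _ s hs, ciSup_const]
    exact (hρ σ).ne' hzero
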